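/- For all α,b,d>0 and every nonnegative integer n, the limit as ν→+∞ of p_n(x;α,b,d,ν) exists for every real x, and there exist a nonzero real ρ' and a real σ' such that this limit equals ρ'^n·p_n^{(α,bα)}(ρ'^{−1}x−σ') for all real x; that is, in the limit ν→∞ the rescaled monic Racah polynomials become rescaled monic Jacobi polynomials with parameters (α, bα). -/

import Mathlib

open Filter Real

/-- Pochhammer symbol `(a)_m = a (a+1) ⋯ (a+m-1)`. -/
noncomputable def poch (a : ℝ) (m : ℕ) : ℝ := ∏ j ∈ Finset.range m, (a + j)

/-- Monic Hermite polynomial of degree `n`. -/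
noncomputable def monicHermite (n : ℕ) (x : ℝ) : ℝ :=
  (n.factorial : ℝ) * ∑ m ∈ Finset.range (n / 2 + 1),
    (-1 : ℝ) ^ m * x ^ (n - 2 * m) / (4 ^ m * m.factorial * (n - 2 * m).factorial)

/-- Monic Laguerre polynomial of degree `n` with parameter `α`. -/
noncomputable def monicLaguerre (α : ℝ) (n : ℕ) (x : ℝ) : ℝ :=
  (-1 : ℝ) ^ n * n.factorial * ∑ k ∈ Finset.range (n + 1),
    (-1 : ℝ) ^ k * (poch (α + k + 1) (n - k) / ((n - k).factorial * k.factorial)) * x ^ k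

/-- Monic Jacobi polynomial of degree `n` with parameters `α, β`. -/
noncomputable def monicJacobi (α β : ℝ) (n : ℕ) (x : ℝ) : ℝ :=
  ((n.factorial : ℝ) / poch (n + α + β + 1) n) *
    ∑ k ∈ Finset.range (n + 1),
      (poch (n + α - k + 1) k / k.factorial) *
      (poch (β + k + 1) (n - k) / (n - k).factorial) *
      (x - 1) ^ (n - k) * (x + 1) ^ k

/-- Monic Racah polynomial of degree `n` in the variable `y`. -/
noncomputable def monicRacah (α β N δ : ℝ) (n : ℕ) (y : ℝ) : ℝ :=
  (1 / poch (n + α + β + 1) n) *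
    ∑ k ∈ Finset.range (n + 1),
      (poch (-(n : ℝ)) k * poch (n + α + β + 1) k / k.factorial) *
      poch (α + k + 1) (n - k) * poch (β + δ + k + 1) (n - k) * poch (k - N) (n - k) *
      ∏ j ∈ Finset.range k, ((j : ℝ) * (j + δ - N) - y)

/-- Monic Hahn polynomial of degree `n`. -/
noncomputable def monicHahn (α β N : ℝ) (n : ℕ) (x : ℝ) : ℝ :=
  (1 / poch (n + α + β + 1) n) *
    ∑ k ∈ Finset.range (n + 1),
      (poch (-(n : ℝ)) k * poch (n + α + β + 1) k * poch (-x) k / k.factorial) *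
      poch (α + k + 1) (n - k) * poch (k - N) (n - k)

/-- Monic Meixner polynomial of degree `n`. -/
noncomputable def monicMeixner (b c : ℝ) (n : ℕ) (x : ℝ) : ℝ :=
  (c / (c - 1)) ^ n * ∑ k ∈ Finset.range (n + 1),
    (poch (-(n : ℝ)) k * poch (-x) k / k.factorial) * poch (b + k) (n - k) * (1 - 1 / c) ^ k

/-- Monic Krawtchouk polynomial of degree `n`. -/
noncomputable def monicKrawtchouk (p N : ℝ) (n : ℕ) (x : ℝ) : ℝ :=
  p ^ n * ∑ k ∈ Finset.range (n + 1),
    (poch (-(n : ℝ)) k * poch (-x) k / k.factorial) * poch (k - N) (n - k) * (1 / p) ^ k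

/-- `ρ = (α+β)^{3/2} / (αβ)^{1/2}`. -/
noncomputable def jacobiRho (α β : ℝ) : ℝ := (α + β) ^ ((3 : ℝ) / 2) / Real.sqrt (α * β)

/-- `σ = (α-β)/(α+β)`. -/
noncomputable def jacobiSigma (α β : ℝ) : ℝ := (α - β) / (α + β)

/-- Uniformly rescaled monic Jacobi polynomial `p_n(x; α, β) = ρ^n p_n^{(α,β)}(ρ⁻¹x - σ)`. -/
noncomputable def rescaledJacobi (α β : ℝ) (n : ℕ) (x : ℝ) : ℝ :=
  jacobiRho α β ^ n * monicJacobi α β n (x / jacobiRho α β - jacobiSigma α β)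

/-- `ρ = ((α+β)³/(αβ(β+δ)(N+α+β)(δ-α)N))^{1/2}` with `β = bα`, `δ = (bdν+1)α`, `N = bν`. -/
noncomputable def racahRho (α b d ν : ℝ) : ℝ :=
  Real.sqrt ((α + b * α) ^ 3 /
    (α * (b * α) * (b * α + (b * d * ν + 1) * α) * (b * ν + α + b * α) *
      ((b * d * ν + 1) * α - α) * (b * ν)))

/-- `σ = -N(α+1)(β+δ+1)/(α+β+2)` with `β = bα`, `δ = (bdν+1)α`, `N = bν`. -/
noncomputable def racahSigma (α b d ν : ℝ) : ℝ :=
  -((b * ν) * (α + 1) * (b * α + (b * d * ν + 1) * α + 1)) / (α + b * α + 2)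

/-- Rescaled monic Racah polynomial `p_n(x; α, b, d, ν) = ρ^n r_n(ρ⁻¹x - σ; α, bα, bν, (bdν+1)α)`. -/
noncomputable def rescaledRacah (α b d ν : ℝ) (n : ℕ) (x : ℝ) : ℝ :=
  racahRho α b d ν ^ n *
    monicRacah α (b * α) (b * ν) ((b * d * ν + 1) * α) n
      (x / racahRho α b d ν - racahSigma α b d ν)
lemma poch_zero (a : ℝ) : poch a 0 = 1 := by simp [poch]

lemma poch_succ (a : ℝ) (m : ℕ) : poch a (m + 1) = poch a m * (a + m) :=
  Finset.prod_range_succ _ _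

lemma poch_succ_left (a : ℝ) (m : ℕ) : poch a (m + 1) = a * poch (a + 1) m := by
  rw [poch, poch, Finset.prod_range_succ']
  rw [Nat.cast_zero, add_zero, mul_comm]
  congr 1
  exact Finset.prod_congr rfl fun i _ => by push_cast; ring

lemma poch_add (a : ℝ) (p q : ℕ) : poch a (p + q) = poch a p * poch (a + p) q := by
  rw [poch, poch, poch, Finset.prod_range_add]
  congr 1
  exact Finset.prod_congr rfl fun i _ => by push_cast; ring

lemma poch_pos {a : ℝ} (ha : 0 < a) (m : ℕ) : 0 < poch a m :=
  Finset.prod_pos fun j _ => add_pos_of_pos_of_nonneg ha (Nat.cast_nonneg j)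

lemma poch_reflect (c : ℝ) (j : ℕ) : poch (-c) j = (-1) ^ j * poch (c - j + 1) j := by
  induction j with
  | zero => simp [poch]
  | succ j ih =>
    rw [poch_succ, ih, poch_succ_left]
    have harg : c - (j + 1 : ℕ) + 1 + 1 = c - j + 1 := by push_cast; ring
    rw [harg]
    have : c - ((j : ℕ) + 1 : ℕ) + 1 = c - j := by push_cast; ring
    rw [this]
    ring

lemma vand (m : ℕ) (X Y : ℝ) :
    ∑ k ∈ Finset.range (m + 1), (m.choose k : ℝ) * poch X k * poch Y (m - k)
      = poch (X + Y) m := by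
  induction m generalizing X Y with
  | zero => simp [poch]
  | succ m ih =>
    rw [Finset.sum_range_succ']
    have h2 : ∀ k ∈ Finset.range (m + 1),
        ((m + 1).choose (k + 1) : ℝ) * poch X (k + 1) * poch Y (m + 1 - (k + 1))
          = (m.choose k : ℝ) * poch X k * poch Y (m - k) * (X + k)
            + (m.choose (k + 1) : ℝ) * poch X (k + 1) * poch Y (m - k) := by
      intro k _
      rw [Nat.succ_sub_succ, Nat.choose_succ_succ, Nat.cast_add, poch_succ]
      ring
    rw [Finset.sum_congr rfl h2, Finset.sum_add_distrib]
    have h3 : (∑ k ∈ Finset.range (m + 1),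
          (m.choose (k + 1) : ℝ) * poch X (k + 1) * poch Y (m - k))
          + ((m + 1).choose 0 : ℝ) * poch X 0 * poch Y (m + 1 - 0)
        = ∑ k ∈ Finset.range (m + 1),
            (m.choose k : ℝ) * poch X k * poch Y (m - k) * (Y + (m - k : ℕ)) := by
      have := Finset.sum_range_succ' (fun k => (m.choose k : ℝ) * poch X k * poch Y (m + 1 - k)) (m + 1)
      simp only [Nat.succ_sub_succ] at this
      rw [show ((m+1).choose 0 : ℝ) * poch X 0 * poch Y (m + 1 - 0)
            = (m.choose 0 : ℝ) * poch X 0 * poch Y (m + 1 - 0) by norm_num]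
      rw [← this, Finset.sum_range_succ]
      simp only [Nat.choose_succ_self, Nat.cast_zero, zero_mul, add_zero]
      apply Finset.sum_congr rfl
      intro k hk
      have hk' : k ≤ m := Nat.lt_succ_iff.mp (Finset.mem_range.mp hk)
      rw [show m + 1 - k = (m - k) + 1 from by omega, poch_succ]
      ring
    rw [add_assoc, h3, ← Finset.sum_add_distrib]
    have h4 : ∀ k ∈ Finset.range (m + 1),
        (m.choose k : ℝ) * poch X k * poch Y (m - k) * (X + k)
          + (m.choose k : ℝ) * poch X k * poch Y (m - k) * (Y + (m - k : ℕ))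
        = ((m.choose k : ℝ) * poch X k * poch Y (m - k)) * (X + Y + m) := by
      intro k hk
      have hk' : k ≤ m := Nat.lt_succ_iff.mp (Finset.mem_range.mp hk)
      rw [Nat.cast_sub hk']
      ring
    rw [Finset.sum_congr rfl h4, ← Finset.sum_mul, ih, poch_succ]

lemma poch_neg_nat (n : ℕ) : ∀ k : ℕ, k ≤ n →
    poch (-(n : ℝ)) k = (-1) ^ k * k.factorial * n.choose k := by
  intro k
  induction k with
  | zero => simp [poch]
  | succ k ih =>
    intro h
    have hkn : k ≤ n := Nat.le_of_succ_le h
    rw [poch_succ, ih hkn]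
    have hc : ((n.choose (k + 1) : ℝ)) * ((k : ℝ) + 1) = (n.choose k : ℝ) * ((n : ℝ) - k) := by
      have h2 := Nat.choose_succ_right_eq n k
      have h3 : ((n.choose (k + 1) : ℕ) : ℝ) * (((k : ℕ) : ℝ) + 1)
          = ((n.choose k : ℕ) : ℝ) * (((n - k : ℕ) : ℕ) : ℝ) := by exact_mod_cast h2
      rwa [Nat.cast_sub hkn] at h3
    rw [Nat.factorial_succ]
    push_cast
    linear_combination ((-1 : ℝ)) ^ k * (k.factorial : ℝ) * hc

lemma hcc {n m k : ℕ} (hkm : k ≤ m) (hmn : m ≤ n) :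
    ((n.choose k : ℝ)) * ((n - k).choose (m - k) : ℝ) = (n.choose m : ℝ) * (m.choose k : ℝ) := by
  have h1 : k ≤ n := hkm.trans hmn
  have h2 : m - k ≤ n - k := Nat.sub_le_sub_right hmn k
  rw [Nat.cast_choose ℝ h1, Nat.cast_choose ℝ h2, Nat.cast_choose ℝ hmn, Nat.cast_choose ℝ hkm]
  rw [show (n - k) - (m - k) = n - m from tsub_tsub_tsub_cancel_right hkm]
  have f1 := Nat.factorial_ne_zero k
  have f2 := Nat.factorial_ne_zero (m - k)
  have f3 := Nat.factorial_ne_zero (n - m)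
  have f4 := Nat.factorial_ne_zero m
  have f5 := Nat.factorial_ne_zero (n - k)
  field_simp

lemma tri (n : ℕ) (f : ℕ → ℕ → ℝ) :
    ∑ k ∈ Finset.range (n + 1), ∑ j ∈ Finset.range (n - k + 1), f k j
      = ∑ m ∈ Finset.range (n + 1), ∑ k ∈ Finset.range (m + 1), f k (m - k) := by
  induction n with
  | zero => simp
  | succ n ih =>
    have hsplit : ∀ k ∈ Finset.range (n + 2),
        ∑ j ∈ Finset.range (n + 1 - k + 1), f k j
          = (∑ j ∈ Finset.range (n + 1 - k), f k j) + f k (n + 1 - k) :=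
      fun k _ => Finset.sum_range_succ _ _
    rw [Finset.sum_congr rfl hsplit, Finset.sum_add_distrib]
    have h1 : ∑ k ∈ Finset.range (n + 2), ∑ j ∈ Finset.range (n + 1 - k), f k j
        = ∑ k ∈ Finset.range (n + 1), ∑ j ∈ Finset.range (n - k + 1), f k j := by
      rw [Finset.sum_range_succ]
      simp only [Nat.sub_self, Finset.range_zero, Finset.sum_empty, add_zero]
      apply Finset.sum_congr rfl
      intro k hk
      have : n + 1 - k = n - k + 1 := by
        have := Nat.lt_succ_iff.mp (Finset.mem_range.mp hk); omega
      rw [this]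
    rw [h1, ih]
    conv_rhs => rw [Finset.sum_range_succ]

lemma poch_reflect' (C : ℝ) (j : ℕ) : poch (C - j + 1) j = (-1) ^ j * poch (-C) j := by
  rw [poch_reflect C j, ← mul_assoc, ← mul_pow]
  norm_num

lemma vand2 (n m : ℕ) (hmn : m ≤ n) (a c : ℝ) :
    ∑ k ∈ Finset.range (m + 1), (m.choose k : ℝ) * poch (a + k + 1) (n - k) *
        poch (c + ((n - k : ℕ) : ℝ) + 1) k
      = poch ((n : ℝ) + a + c + 1) m * poch (a + m + 1) (n - m) := by
  have key : ∀ k ∈ Finset.range (m + 1),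
      (m.choose k : ℝ) * poch (a + k + 1) (n - k) * poch (c + ((n - k : ℕ) : ℝ) + 1) k
        = ((-1 : ℝ)) ^ m * poch (a + m + 1) (n - m) *
          ((m.choose k : ℝ) * poch (-(c + n)) k * poch (-(a + m)) (m - k)) := by
    intro k hk
    have hkm : k ≤ m := Nat.lt_succ_iff.mp (Finset.mem_range.mp hk)
    have hkn : k ≤ n := hkm.trans hmn
    have hnk : n - k = (m - k) + (n - m) := by omega
    have e4 : poch (c + ((n - k : ℕ) : ℝ) + 1) k = (-1 : ℝ) ^ k * poch (-(c + n)) k := by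
      have e5 : c + ((n - k : ℕ) : ℝ) + 1 = (c + (n : ℝ)) - (k : ℝ) + 1 := by
        rw [Nat.cast_sub hkn]; ring
      rw [e5]
      have := poch_reflect' (c + (n : ℝ)) k
      rw [show ((c + (n:ℝ)) - (k:ℝ) + 1) = (c + (n:ℝ)) - (k:ℕ) + 1 by norm_num] at this ⊢
      exact this
    rw [e4, hnk, poch_add]
    have e1 : a + (k : ℝ) + 1 + ((m - k : ℕ) : ℝ) = a + m + 1 := by
      rw [Nat.cast_sub hkm]; ring
    rw [e1]
    have e2 : poch (a + (k : ℝ) + 1) (m - k) = (-1 : ℝ) ^ (m - k) * poch (-(a + m)) (m - k) := by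
      have e3 : a + (k : ℝ) + 1 = (a + (m : ℝ)) - ((m - k : ℕ) : ℝ) + 1 := by
        rw [Nat.cast_sub hkm]; ring
      rw [e3, poch_reflect']
    rw [e2]
    have e6 : (-1 : ℝ) ^ (m - k) * (-1 : ℝ) ^ k = (-1 : ℝ) ^ m := by
      rw [← pow_add]; congr 1; omega
    linear_combination (m.choose k : ℝ) * poch (-(a + m)) (m - k) * poch (a + m + 1) (n - m) *
      poch (-(c + n)) k * e6
  rw [Finset.sum_congr rfl key, ← Finset.mul_sum, vand]
  have e8 : -(c + (n : ℝ)) + -(a + (m : ℝ)) = -((c + n + a + m)) := by ring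
  rw [e8]
  have e9 : poch ((n : ℝ) + a + c + 1) m = (-1) ^ m * poch (-(c + (n : ℝ) + a + (m : ℝ))) m := by
    have e10 : (n : ℝ) + a + c + 1 = (c + (n : ℝ) + a + (m : ℝ)) - (m : ℝ) + 1 := by ring
    rw [e10, poch_reflect']
  rw [e9]; ring

lemma keyJ (n : ℕ) (a c A u : ℝ) :
    ∑ k ∈ Finset.range (n + 1), (n.choose k : ℝ) * poch ((n : ℝ) + a - k + 1) k *
        poch (c + k + 1) (n - k) * u ^ (n - k) * (u + A) ^ k
      = ∑ m ∈ Finset.range (n + 1), (n.choose m : ℝ) * poch ((n : ℝ) + a + c + 1) m *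
          poch (a + m + 1) (n - m) * A ^ (n - m) * u ^ m := by
  rw [← Finset.sum_range_reflect]
  simp only [Nat.add_sub_cancel]
  have step1 : ∀ k ∈ Finset.range (n + 1),
      (n.choose (n - k) : ℝ) * poch ((n : ℝ) + a - ((n - k : ℕ) : ℝ) + 1) (n - k) *
          poch (c + ((n - k : ℕ) : ℝ) + 1) (n - (n - k)) * u ^ (n - (n - k)) * (u + A) ^ (n - k)
        = ∑ j ∈ Finset.range (n - k + 1),
            (n.choose k : ℝ) * poch (a + k + 1) (n - k) * poch (c + ((n - k : ℕ) : ℝ) + 1) k *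
              u ^ k * (u ^ j * A ^ (n - k - j) * ((n - k).choose j : ℝ)) := by
    intro k hk
    have hkn : k ≤ n := Nat.lt_succ_iff.mp (Finset.mem_range.mp hk)
    rw [Nat.choose_symm hkn, Nat.sub_sub_self hkn]
    have e1 : (n : ℝ) + a - ((n - k : ℕ) : ℝ) + 1 = a + k + 1 := by
      rw [Nat.cast_sub hkn]; ring
    rw [e1, add_pow, Finset.mul_sum]
  rw [Finset.sum_congr rfl step1, tri]
  apply Finset.sum_congr rfl
  intro m hm
  have hmn : m ≤ n := Nat.lt_succ_iff.mp (Finset.mem_range.mp hm)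
  have step3 : ∀ k ∈ Finset.range (m + 1),
      (n.choose k : ℝ) * poch (a + k + 1) (n - k) * poch (c + ((n - k : ℕ) : ℝ) + 1) k *
          u ^ k * (u ^ (m - k) * A ^ (n - k - (m - k)) * ((n - k).choose (m - k) : ℝ))
        = ((n.choose m : ℝ) * (A ^ (n - m) * u ^ m)) *
            ((m.choose k : ℝ) * poch (a + k + 1) (n - k) * poch (c + ((n - k : ℕ) : ℝ) + 1) k) := by
    intro k hk
    have hkm : k ≤ m := Nat.lt_succ_iff.mp (Finset.mem_range.mp hk)
    rw [show n - k - (m - k) = n - m from tsub_tsub_tsub_cancel_right hkm]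
    have hu : u ^ k * u ^ (m - k) = u ^ m := by rw [← pow_add, Nat.add_sub_cancel' hkm]
    linear_combination poch (a + (k:ℝ) + 1) (n - k) * poch (c + ((n - k : ℕ) : ℝ) + 1) k *
        A ^ (n - m) * ((n.choose k : ℝ) * ((n - k).choose (m - k) : ℝ)) * hu
      + poch (a + (k:ℝ) + 1) (n - k) * poch (c + ((n - k : ℕ) : ℝ) + 1) k *
        A ^ (n - m) * u ^ m * hcc hkm hmn
  rw [Finset.sum_congr rfl step3, ← Finset.mul_sum, vand2 n m hmn a c]
  ring

lemma tendsto_comp_inv {g : ℝ → ℝ} (hg : ContinuousAt g 0) {f : ℝ → ℝ}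
    (hfg : ∀ᶠ ν in Filter.atTop, f ν = g ν⁻¹) : Filter.Tendsto f Filter.atTop (nhds (g 0)) :=
  ((hg.tendsto.comp tendsto_inv_atTop_zero)).congr' (hfg.mono fun ν h => h.symm)

/-- as `ν → ∞`, the rescaled monic Racah polynomials tend to rescaled monic
Jacobi polynomials with parameters `(α, bα)`. -/
theorem rescaled_racah_to_jacobi (α b d : ℝ) (hα : 0 < α) (hb : 0 < b) (hd : 0 < d) (n : ℕ) :
    ∃ ρ' σ' : ℝ, ρ' ≠ 0 ∧ ∀ x : ℝ,
      Filter.Tendsto (fun ν : ℝ => rescaledRacah α b d ν n x) Filter.atTop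
        (nhds (ρ' ^ n * monicJacobi α (b * α) n (x / ρ' - σ'))) := by
  have hden0ne : α * (b * α) * (b * d * α + (b * α + α) * 0) * (b + (α + b * α) * 0) *
      (b * d * α) * b ≠ 0 := by
    have : (0:ℝ) < α * (b * α) * (b * d * α + (b * α + α) * 0) * (b + (α + b * α) * 0) *
        (b * d * α) * b := by
      simp only [mul_zero, add_zero]
      positivity
    exact this.ne'
  have hgQcont : ContinuousAt (fun t : ℝ => (α + b * α) ^ 3 /
      (α * (b * α) * (b * d * α + (b * α + α) * t) * (b + (α + b * α) * t) *
        (b * d * α) * b)) 0 :=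
    ContinuousAt.div (by fun_prop) (by fun_prop) hden0ne
  set q0 : ℝ := (α + b * α) ^ 3 / (α * (b * α) * (b * d * α) * b * (b * d * α) * b) with hq0def
  have hq0pos : 0 < q0 := by
    rw [hq0def]
    positivity
  set s0 : ℝ := Real.sqrt q0 with hs0def
  have hs0pos : 0 < s0 := Real.sqrt_pos.mpr hq0pos
  -- limit of ν² ρ(ν)
  have hnu2rho : Filter.Tendsto (fun ν : ℝ => ν ^ 2 * racahRho α b d ν) Filter.atTop
      (nhds s0) := by
    have := tendsto_comp_inv (g := fun t : ℝ => Real.sqrt ((α + b * α) ^ 3 /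
        (α * (b * α) * (b * d * α + (b * α + α) * t) * (b + (α + b * α) * t) *
          (b * d * α) * b)))
      (Real.continuous_sqrt.continuousAt.comp hgQcont) (f := fun ν : ℝ => ν ^ 2 * racahRho α b d ν) ?_
    · simpa using this
    · filter_upwards [Filter.eventually_ge_atTop (1 : ℝ)] with ν hν
      have hν0 : (0 : ℝ) < ν := lt_of_lt_of_le one_pos hν
      rw [racahRho]
      rw [show (ν : ℝ) ^ 2 = Real.sqrt ((ν ^ 2) ^ 2) from (Real.sqrt_sq (by positivity)).symm]
      rw [← Real.sqrt_mul (by positivity)]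
      congr 1
      have h3 : (0 : ℝ) < b * α + (b * d * ν + 1) * α := by positivity
      have h4 : (0 : ℝ) < b * ν + α + b * α := by positivity
      have h5 : (0 : ℝ) < (b * d * ν + 1) * α - α := by
        have := mul_pos (mul_pos (mul_pos hb hd) hν0) hα
        nlinarith
      have h6 : (0 : ℝ) < b * ν := by positivity
      have h7 : (0 : ℝ) < b * d * α + (b * α + α) * ν⁻¹ := by positivity
      have h8 : (0 : ℝ) < b + (α + b * α) * ν⁻¹ := by positivity
      field_simp
      ring
  -- master lemma for limits of ρ(ν) h(ν)
  have factor_lim : ∀ h g : ℝ → ℝ, ContinuousAt g 0 →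
      (∀ ν : ℝ, 1 ≤ ν → h ν = ν ^ 2 * g ν⁻¹) →
      Filter.Tendsto (fun ν : ℝ => racahRho α b d ν * h ν) Filter.atTop (nhds (s0 * g 0)) := by
    intro h g hgc hev
    have h1 : Filter.Tendsto (fun ν : ℝ => (ν ^ 2 * racahRho α b d ν) * g ν⁻¹) Filter.atTop
        (nhds (s0 * g 0)) := hnu2rho.mul (hgc.tendsto.comp tendsto_inv_atTop_zero)
    apply h1.congr'
    filter_upwards [Filter.eventually_ge_atTop (1 : ℝ)] with ν hν
    rw [hev ν hν]; ring
  set A : ℝ := s0 * (b * d * α * -b) with hAdef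
  have hAneg : A < 0 := by
    rw [hAdef]
    have : (0:ℝ) < b * d * α * b := by positivity
    nlinarith
  set Lσ : ℝ := s0 * (-(b * (α + 1) * (b * d * α)) * (α + b * α + 2)⁻¹) with hLσdef
  set ρ' : ℝ := A / 2 with hρ'def
  have hρ'ne : ρ' ≠ 0 := by rw [hρ'def]; exact div_ne_zero (ne_of_lt hAneg) two_ne_zero
  set σ' : ℝ := Lσ / ρ' - 1 with hσ'def
  refine ⟨ρ', σ', hρ'ne, fun x => ?_⟩
  -- the three basic factor limits
  have hΦ : ∀ k i : ℕ, Filter.Tendsto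
      (fun ν : ℝ => racahRho α b d ν *
        ((b * α + (b * d * ν + 1) * α + (k : ℝ) + 1 + (i : ℝ)) * ((k : ℝ) - b * ν + (i : ℝ))))
      Filter.atTop (nhds A) := by
    intro k i
    have := factor_lim
      (fun ν : ℝ => (b * α + (b * d * ν + 1) * α + (k : ℝ) + 1 + (i : ℝ)) * ((k : ℝ) - b * ν + (i : ℝ)))
      (fun t : ℝ => (b * d * α + (b * α + α + (k : ℝ) + 1 + (i : ℝ)) * t) * (-b + ((k : ℝ) + (i : ℝ)) * t))
      (by fun_prop) ?_
    · convert this using 2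
      rw [hAdef]; norm_num
    · intro ν hν
      have hν0 : ν ≠ 0 := (lt_of_lt_of_le one_pos hν).ne'
      field_simp
      ring
  -- limit of ρσ
  have hσ : Filter.Tendsto (fun ν : ℝ => racahRho α b d ν * racahSigma α b d ν)
      Filter.atTop (nhds Lσ) := by
    have := factor_lim (fun ν : ℝ => racahSigma α b d ν)
      (fun t : ℝ => -(b * (α + 1) * (b * d * α + (b * α + α + 1) * t)) * (α + b * α + 2)⁻¹)
      (by fun_prop) ?_
    · convert this using 2
      rw [hLσdef]
      norm_num
    · intro ν hν
      have hν0 : ν ≠ 0 := (lt_of_lt_of_le one_pos hν).ne'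
      have hs : (0:ℝ) < α + b * α + 2 := by positivity
      simp only [racahSigma]
      field_simp
      ring
  -- limit of ρ · c_j
  have hψ0 : ∀ j : ℕ, Filter.Tendsto
      (fun ν : ℝ => racahRho α b d ν * ((j : ℝ) * ((j : ℝ) + (b * d * ν + 1) * α - b * ν)))
      Filter.atTop (nhds 0) := by
    intro j
    have := factor_lim
      (fun ν : ℝ => (j : ℝ) * ((j : ℝ) + (b * d * ν + 1) * α - b * ν))
      (fun t : ℝ => ((j : ℝ) * t) * ((j : ℝ) * t + b * d * α + α * t - b))
      (by fun_prop) ?_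
    · convert this using 2
      norm_num
    · intro ν hν
      have hν0 : ν ≠ 0 := (lt_of_lt_of_le one_pos hν).ne'
      field_simp
      ring
  have hψ : ∀ j : ℕ, Filter.Tendsto
      (fun ν : ℝ => racahRho α b d ν * ((j : ℝ) * ((j : ℝ) + (b * d * ν + 1) * α - b * ν))
        - x + racahRho α b d ν * racahSigma α b d ν)
      Filter.atTop (nhds ((0 : ℝ) - x + Lσ)) := fun j => ((hψ0 j).sub_const x).add hσ
  -- eventual identification of the rescaled Racah polynomial
  have hC : (0:ℝ) < poch ((n:ℝ) + α + b * α + 1) n := poch_pos (by positivity) n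
  have hev : ∀ᶠ ν in Filter.atTop, rescaledRacah α b d ν n x =
      (1 / poch ((n:ℝ) + α + b * α + 1) n) *
        ∑ k ∈ Finset.range (n + 1),
          poch (-(n:ℝ)) k * poch ((n:ℝ) + α + b * α + 1) k / (k.factorial : ℝ) *
            poch (α + (k:ℝ) + 1) (n - k) *
            (∏ i ∈ Finset.range (n - k), racahRho α b d ν *
              ((b * α + (b * d * ν + 1) * α + (k:ℝ) + 1 + (i:ℝ)) * ((k:ℝ) - b * ν + (i:ℝ)))) *
            (∏ j ∈ Finset.range k,
              (racahRho α b d ν * ((j:ℝ) * ((j:ℝ) + (b * d * ν + 1) * α - b * ν))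
                - x + racahRho α b d ν * racahSigma α b d ν)) := by
    filter_upwards [Filter.eventually_ge_atTop (1:ℝ)] with ν hν
    have hν0 : (0:ℝ) < ν := lt_of_lt_of_le one_pos hν
    have hρpos : 0 < racahRho α b d ν := by
      rw [racahRho]
      apply Real.sqrt_pos.mpr
      apply div_pos (by positivity)
      rw [show (b * d * ν + 1) * α - α = b * d * ν * α from by ring]
      positivity
    rw [rescaledRacah, monicRacah, mul_left_comm]
    congr 1
    rw [Finset.mul_sum]
    apply Finset.sum_congr rfl
    intro k hk
    have hk' : k ≤ n := Nat.lt_succ_iff.mp (Finset.mem_range.mp hk)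
    have e1 : (∏ i ∈ Finset.range (n - k), racahRho α b d ν *
          ((b * α + (b * d * ν + 1) * α + (k:ℝ) + 1 + (i:ℝ)) * ((k:ℝ) - b * ν + (i:ℝ))))
        = racahRho α b d ν ^ (n - k) *
          (poch (b * α + (b * d * ν + 1) * α + (k:ℝ) + 1) (n - k) * poch ((k:ℝ) - b * ν) (n - k)) := by
      rw [Finset.prod_mul_distrib, Finset.prod_const, Finset.card_range,
        Finset.prod_mul_distrib, poch, poch]
    have e2 : (∏ j ∈ Finset.range k,
          (racahRho α b d ν * ((j:ℝ) * ((j:ℝ) + (b * d * ν + 1) * α - b * ν))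
            - x + racahRho α b d ν * racahSigma α b d ν))
        = racahRho α b d ν ^ k * ∏ j ∈ Finset.range k,
            ((j:ℝ) * ((j:ℝ) + (b * d * ν + 1) * α - b * ν)
              - (x / racahRho α b d ν - racahSigma α b d ν)) := by
      rw [show racahRho α b d ν ^ k = ∏ _j ∈ Finset.range k, racahRho α b d ν from by
        rw [Finset.prod_const, Finset.card_range], ← Finset.prod_mul_distrib]
      apply Finset.prod_congr rfl
      intro j _
      field_simp
      ring
    rw [e1, e2, show racahRho α b d ν ^ n
        = racahRho α b d ν ^ (n - k) * racahRho α b d ν ^ k from by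
      rw [← pow_add, Nat.sub_add_cancel hk']]
    ring
  -- assemble the limit of the rearranged expression
  have hterm : ∀ k ∈ Finset.range (n + 1), Filter.Tendsto (fun ν : ℝ =>
      poch (-(n:ℝ)) k * poch ((n:ℝ) + α + b * α + 1) k / (k.factorial : ℝ) *
        poch (α + (k:ℝ) + 1) (n - k) *
        (∏ i ∈ Finset.range (n - k), racahRho α b d ν *
          ((b * α + (b * d * ν + 1) * α + (k:ℝ) + 1 + (i:ℝ)) * ((k:ℝ) - b * ν + (i:ℝ)))) *
        (∏ j ∈ Finset.range k,
          (racahRho α b d ν * ((j:ℝ) * ((j:ℝ) + (b * d * ν + 1) * α - b * ν))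
            - x + racahRho α b d ν * racahSigma α b d ν)))
      Filter.atTop (nhds (poch (-(n:ℝ)) k * poch ((n:ℝ) + α + b * α + 1) k / (k.factorial : ℝ) *
        poch (α + (k:ℝ) + 1) (n - k) * (∏ _i ∈ Finset.range (n - k), A) *
        (∏ _j ∈ Finset.range k, ((0:ℝ) - x + Lσ)))) := by
    intro k _
    exact (((tendsto_const_nhds).mul
      (tendsto_finset_prod _ (fun i _ => hΦ k i))).mul
      (tendsto_finset_prod _ (fun j _ => hψ j)))
  have hG := (tendsto_finset_sum (Finset.range (n + 1)) hterm).const_mul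
    (1 / poch ((n:ℝ) + α + b * α + 1) n)
  -- identify the limit with the rescaled Jacobi polynomial
  have hAne : A ≠ 0 := ne_of_lt hAneg
  have hstep : (1 / poch ((n:ℝ) + α + b * α + 1) n) *
      ∑ k ∈ Finset.range (n + 1),
        poch (-(n:ℝ)) k * poch ((n:ℝ) + α + b * α + 1) k / (k.factorial : ℝ) *
          poch (α + (k:ℝ) + 1) (n - k) * (∏ _i ∈ Finset.range (n - k), A) *
          (∏ _j ∈ Finset.range k, ((0:ℝ) - x + Lσ))
      = (1 / poch ((n:ℝ) + α + b * α + 1) n) *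
        ∑ m ∈ Finset.range (n + 1), (n.choose m : ℝ) * poch ((n:ℝ) + α + b * α + 1) m *
          poch (α + (m:ℝ) + 1) (n - m) * A ^ (n - m) * (x - Lσ) ^ m := by
    congr 1
    apply Finset.sum_congr rfl
    intro k hk
    have hk' : k ≤ n := Nat.lt_succ_iff.mp (Finset.mem_range.mp hk)
    simp only [Finset.prod_const, Finset.card_range]
    rw [poch_neg_nat n k hk']
    have h2 : ((-1:ℝ))^k * (-1)^k = 1 := by rw [← mul_pow]; norm_num
    have hkf : (k.factorial : ℝ) ≠ 0 := Nat.cast_ne_zero.mpr k.factorial_ne_zero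
    have hc : (-1:ℝ)^k * (k.factorial:ℝ) * (n.choose k : ℝ) * poch ((n:ℝ) + α + b * α + 1) k
          / (k.factorial:ℝ)
        = (-1:ℝ)^k * ((n.choose k : ℝ) * poch ((n:ℝ) + α + b * α + 1) k) := by
      field_simp
    have hneg : ((0:ℝ) - x + Lσ) ^ k = (-1) ^ k * (x - Lσ) ^ k := by
      rw [show (0:ℝ) - x + Lσ = -(x - Lσ) from by ring, neg_pow]
    rw [hc, hneg]
    linear_combination ((n.choose k : ℝ) * poch ((n:ℝ) + α + b * α + 1) k *
      poch (α + (k:ℝ) + 1) (n - k) * A ^ (n - k) * (x - Lσ) ^ k) * h2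
  have hJ : ρ' ^ n * monicJacobi α (b * α) n (x / ρ' - σ') =
      (1 / poch ((n:ℝ) + α + b * α + 1) n) *
        ∑ k ∈ Finset.range (n + 1),
          (n.choose k : ℝ) * poch ((n:ℝ) + α - (k:ℝ) + 1) k * poch (b * α + (k:ℝ) + 1) (n - k) *
            (x - Lσ) ^ (n - k) * (x - Lσ + A) ^ k := by
    rw [monicJacobi, ← mul_assoc, Finset.mul_sum, Finset.mul_sum]
    apply Finset.sum_congr rfl
    intro k hk
    have hk' : k ≤ n := Nat.lt_succ_iff.mp (Finset.mem_range.mp hk)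
    have hy2 : x - Lσ + A = ρ' * (x / ρ' - σ' + 1) := by
      rw [hσ'def, hρ'def]
      field_simp
      ring
    have hy1 : x - Lσ = ρ' * (x / ρ' - σ' - 1) := by
      rw [hσ'def]
      field_simp
      ring
    rw [hy2, hy1, mul_pow, mul_pow, Nat.cast_choose ℝ hk']
    have hρn : ρ' ^ n = ρ' ^ (n - k) * ρ' ^ k := by rw [← pow_add, Nat.sub_add_cancel hk']
    rw [hρn]
    have hkf : (k.factorial : ℝ) ≠ 0 := Nat.cast_ne_zero.mpr k.factorial_ne_zero
    have hnkf : ((n - k).factorial : ℝ) ≠ 0 := Nat.cast_ne_zero.mpr (n - k).factorial_ne_zero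
    have hCne : poch ((n:ℝ) + α + b * α + 1) n ≠ 0 := hC.ne'
    field_simp
  have hfinal : ρ' ^ n * monicJacobi α (b * α) n (x / ρ' - σ') =
      (1 / poch ((n:ℝ) + α + b * α + 1) n) *
        ∑ k ∈ Finset.range (n + 1),
          poch (-(n:ℝ)) k * poch ((n:ℝ) + α + b * α + 1) k / (k.factorial : ℝ) *
            poch (α + (k:ℝ) + 1) (n - k) * (∏ _i ∈ Finset.range (n - k), A) *
            (∏ _j ∈ Finset.range k, ((0:ℝ) - x + Lσ)) := by
    rw [hJ, keyJ n α (b * α) A (x - Lσ)]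
    exact hstep.symm
  rw [hfinal]
  exact hG.congr' (hev.mono fun ν h => h.symm)
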